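/- In the algebra A_P (with presentation as in context), the subspace J = span{x_β, x_β·x, x_β·x², x_{α+β}, x_{α+β}·x, x_{α+β}·x²} is a two-sided ideal of A_P satisfying J² = 0. -/
import Mathlib


noncomputable section

open FreeAlgebra

/-- Free generators: `0 ↦ x`, `1 ↦ y`, `2 ↦ x_α`, `3 ↦ x_{−α}`, `4 ↦ x_β`, `5 ↦ x_{α+β}`. -/
abbrev F : Type := FreeAlgebra ℂ (Fin 6)

def X : F := FreeAlgebra.ι ℂ 0
def Y : F := FreeAlgebra.ι ℂ 1
def Xa : F := FreeAlgebra.ι ℂ 2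
def Xma : F := FreeAlgebra.ι ℂ 3
def Xb : F := FreeAlgebra.ι ℂ 4
def Xab : F := FreeAlgebra.ι ℂ 5

/-- The defining relations of the algebra `A_P`. -/
inductive RelP : F → F → Prop
  | r1a : RelP (X * Xa) Xa
  | r1b : RelP (X * Xma) (-Xma)
  | r1c : RelP (Xa * X) (-Xa)
  | r1d : RelP (Xma * X) Xma
  | r2a : RelP (Xa * Xma) ((2⁻¹ : ℂ) • (X * X + X))
  | r2b : RelP (Xma * Xa) ((2⁻¹ : ℂ) • (X * X - X))
  | r3a : RelP (X * Y) (Y * X)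
  | r3b : RelP (X * X * X) X
  | r4a : RelP (Y * Xa) (Xa * Y - Xa)
  | r4b : RelP (Y * Xma) (Xma * Y + Xma)
  | r5a : RelP (Xb * Y) (-Xb)
  | r5b : RelP (Y * Xb) Xb
  | r6a : RelP (Xab * (X + Y)) (-Xab)
  | r6b : RelP ((X + Y) * Xab) Xab
  | r7a : RelP (X * Xb - Xb * X) (-Xb)
  | r7b : RelP (X * Xab - Xab * X) Xab
  | r8a : RelP (Xa * Xb) (-(Xab * Y))
  | r8b : RelP (Xb * Xa) (-(Xab * Y) - Xab)
  | r9a : RelP (Xma * Xab) (-(Xb * X) + Xb)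
  | r9b : RelP (Xab * Xma) (-(Xb * X))
  | r10a : RelP (Xa * Xa) 0
  | r10b : RelP (Xma * Xma) 0
  | r10c : RelP (Xb * Xb) 0
  | r10d : RelP (Xab * Xab) 0
  | r10e : RelP (Xa * Xab) 0
  | r10f : RelP (Xab * Xa) 0
  | r10g : RelP (Xb * Xab) 0
  | r10h : RelP (Xab * Xb) 0
  | r10i : RelP (Xb * Xma) 0
  | r10j : RelP (Xma * Xb) 0

/-- The algebra `A_P`, presented by the six generators and the relations above. -/
abbrev AP : Type := RingQuot RelP

def p : F →ₐ[ℂ] AP := RingQuot.mkAlgHom ℂ RelP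

def x : AP := p X
def y : AP := p Y
def xa : AP := p Xa
def xma : AP := p Xma
def xb : AP := p Xb
def xab : AP := p Xab

/-!
STATEMENT 10: In `A_P`, the subspace
`J = span{x_β, x_β·x, x_β·x², x_{α+β}, x_{α+β}·x, x_{α+β}·x²}`
is a two-sided ideal with `J² = 0`.
-/

/-- The ℂ-subspace `J` of `A_P`. -/
def Jspan : Submodule ℂ AP :=
  Submodule.span ℂ {xb, xb * x, xb * (x * x), xab, xab * x, xab * (x * x)}

-- Auxiliary development for stmt10

lemma pr {a b : F} (h : RelP a b) : p a = p b := RingQuot.mkAlgHom_rel ℂ h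

lemma x_xa : x * xa = xa := by
  have := pr RelP.r1a; rw [map_mul] at this; exact this
lemma x_xma : x * xma = -xma := by
  have := pr RelP.r1b; rw [map_mul, map_neg] at this; exact this
lemma x_y : x * y = y * x := by
  have := pr RelP.r3a; rw [map_mul, map_mul] at this; exact this
lemma x3 : x * x * x = x := by
  have := pr RelP.r3b; rw [map_mul, map_mul] at this; exact this
lemma xb_y : xb * y = -xb := by
  have := pr RelP.r5a; rw [map_mul, map_neg] at this; exact this
lemma y_xb : y * xb = xb := by
  have := pr RelP.r5b; rw [map_mul] at this; exact this
lemma x_xb : x * xb = xb * x - xb := by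
  have := pr RelP.r7a; rw [map_sub, map_mul, map_mul, map_neg] at this
  have h2 : (x * xb - xb * x : AP) = -xb := this
  rw [sub_eq_iff_eq_add] at h2; rw [h2]; noncomm_ring
lemma x_xab : x * xab = xab * x + xab := by
  have := pr RelP.r7b; rw [map_sub, map_mul, map_mul] at this
  have h2 : (x * xab - xab * x : AP) = xab := this
  rw [sub_eq_iff_eq_add] at h2; rw [h2]; abel
lemma xab_y : xab * y = -xab - xab * x := by
  have := pr RelP.r6a; rw [map_mul, map_add, map_neg] at this
  have h2 : (xab * (x + y) : AP) = -xab := this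
  rw [mul_add] at h2
  exact eq_sub_of_add_eq' h2
lemma y_xab : y * xab = -(xab * x) := by
  have := pr RelP.r6b; rw [map_mul, map_add] at this
  have h2 : ((x + y) * xab : AP) = xab := this
  rw [add_mul] at h2
  rw [eq_sub_of_add_eq' h2, x_xab]; noncomm_ring
lemma xa_xb : xa * xb = xab + xab * x := by
  have := pr RelP.r8a; rw [map_mul, map_neg, map_mul] at this
  have h2 : (xa * xb : AP) = -(xab * y) := this
  rw [h2, xab_y]; noncomm_ring
lemma xb_xa : xb * xa = xab * x := by
  have := pr RelP.r8b; rw [map_mul, map_sub, map_neg, map_mul] at this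
  have h2 : (xb * xa : AP) = -(xab * y) - xab := this
  rw [h2, xab_y]; noncomm_ring
lemma xma_xab : xma * xab = xb - xb * x := by
  have := pr RelP.r9a; rw [map_mul, map_add, map_neg, map_mul] at this
  have h2 : (xma * xab : AP) = -(xb * x) + xb := this
  rw [h2]; noncomm_ring
lemma xab_xma : xab * xma = -(xb * x) := by
  have := pr RelP.r9b; rw [map_mul, map_neg, map_mul] at this; exact this
lemma xb_xb : xb * xb = 0 := by
  have := pr RelP.r10c; rw [map_mul, map_zero] at this; exact this
lemma xab_xab : xab * xab = 0 := by
  have := pr RelP.r10d; rw [map_mul, map_zero] at this; exact this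
lemma xa_xab : xa * xab = 0 := by
  have := pr RelP.r10e; rw [map_mul, map_zero] at this; exact this
lemma xab_xa : xab * xa = 0 := by
  have := pr RelP.r10f; rw [map_mul, map_zero] at this; exact this
lemma xb_xab : xb * xab = 0 := by
  have := pr RelP.r10g; rw [map_mul, map_zero] at this; exact this
lemma xab_xb : xab * xb = 0 := by
  have := pr RelP.r10h; rw [map_mul, map_zero] at this; exact this
lemma xb_xma : xb * xma = 0 := by
  have := pr RelP.r10i; rw [map_mul, map_zero] at this; exact this
lemma xma_xb : xma * xb = 0 := by
  have := pr RelP.r10j; rw [map_mul, map_zero] at this; exact this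

lemma m1 : xb ∈ Jspan := Submodule.subset_span (by simp)
lemma m2 : xb * x ∈ Jspan := Submodule.subset_span (by simp)
lemma m3 : xb * (x * x) ∈ Jspan := Submodule.subset_span (by simp)
lemma m4 : xab ∈ Jspan := Submodule.subset_span (by simp)
lemma m5 : xab * x ∈ Jspan := Submodule.subset_span (by simp)
lemma m6 : xab * (x * x) ∈ Jspan := Submodule.subset_span (by simp)

lemma basis_cases {b : AP}
    (hb : b ∈ ({xb, xb * x, xb * (x * x), xab, xab * x, xab * (x * x)} : Set AP)) :
    b = xb ∨ b = xb * x ∨ b = xb * (x * x) ∨ b = xab ∨ b = xab * x ∨ b = xab * (x * x) := by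
  simpa [Set.mem_insert_iff] using hb

/-- J is stable under right multiplication by x. -/
lemma J_mul_x : ∀ a ∈ Jspan, a * x ∈ Jspan := by
  intro a ha
  induction ha using Submodule.span_induction with
  | mem b hb =>
    rcases basis_cases hb with rfl | rfl | rfl | rfl | rfl | rfl
    · exact m2
    · rw [mul_assoc]; exact m3
    · have h : xb * (x * x) * x = xb * x := by rw [mul_assoc, x3]
      rw [h]; exact m2
    · exact m5
    · rw [mul_assoc]; exact m6
    · have h : xab * (x * x) * x = xab * x := by rw [mul_assoc, x3]
      rw [h]; exact m5
  | zero => rw [zero_mul]; exact Submodule.zero_mem _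
  | add u v _ _ hu hv => rw [add_mul]; exact Submodule.add_mem _ hu hv
  | smul c u _ hu => rw [smul_mul_assoc]; exact Submodule.smul_mem _ _ hu

lemma left_aux {g : AP} (h1 : g * xb ∈ Jspan) (h2 : g * xab ∈ Jspan) :
    ∀ a ∈ Jspan, g * a ∈ Jspan := by
  intro a ha
  induction ha using Submodule.span_induction with
  | mem b hb =>
    rcases basis_cases hb with rfl | rfl | rfl | rfl | rfl | rfl
    · exact h1
    · rw [← mul_assoc]; exact J_mul_x _ h1
    · rw [show g * (xb * (x * x)) = g * xb * x * x by noncomm_ring]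
      exact J_mul_x _ (J_mul_x _ h1)
    · exact h2
    · rw [← mul_assoc]; exact J_mul_x _ h2
    · rw [show g * (xab * (x * x)) = g * xab * x * x by noncomm_ring]
      exact J_mul_x _ (J_mul_x _ h2)
  | zero => rw [mul_zero]; exact Submodule.zero_mem _
  | add u v _ _ hu hv => rw [mul_add]; exact Submodule.add_mem _ hu hv
  | smul c u _ hu => rw [mul_smul_comm]; exact Submodule.smul_mem _ _ hu

lemma x_xb' (t : AP) : x * (xb * t) = xb * (x * t) - xb * t := by
  rw [← mul_assoc, x_xb, sub_mul, mul_assoc]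
lemma x_xab' (t : AP) : x * (xab * t) = xab * (x * t) + xab * t := by
  rw [← mul_assoc, x_xab, add_mul, mul_assoc]
lemma xb_xb' (t : AP) : xb * (xb * t) = 0 := by rw [← mul_assoc, xb_xb, zero_mul]
lemma xab_xb' (t : AP) : xab * (xb * t) = 0 := by rw [← mul_assoc, xab_xb, zero_mul]
lemma xb_xab' (t : AP) : xb * (xab * t) = 0 := by rw [← mul_assoc, xb_xab, zero_mul]
lemma xab_xab' (t : AP) : xab * (xab * t) = 0 := by rw [← mul_assoc, xab_xab, zero_mul]

lemma xx_y : (x * x) * y = y * (x * x) := by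
  rw [mul_assoc, x_y, ← mul_assoc, x_y, mul_assoc]

lemma J_mul_y : ∀ a ∈ Jspan, a * y ∈ Jspan := by
  intro a ha
  induction ha using Submodule.span_induction with
  | mem b hb =>
    rcases basis_cases hb with rfl | rfl | rfl | rfl | rfl | rfl
    · rw [xb_y]; exact Submodule.neg_mem _ m1
    · rw [mul_assoc, x_y, ← mul_assoc, xb_y]
      exact J_mul_x _ (Submodule.neg_mem _ m1)
    · rw [mul_assoc, xx_y, ← mul_assoc, xb_y, ← mul_assoc]
      exact J_mul_x _ (J_mul_x _ (Submodule.neg_mem _ m1))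
    · rw [xab_y]
      exact Submodule.sub_mem _ (Submodule.neg_mem _ m4) m5
    · rw [mul_assoc, x_y, ← mul_assoc, xab_y]
      exact J_mul_x _ (Submodule.sub_mem _ (Submodule.neg_mem _ m4) m5)
    · rw [mul_assoc, xx_y, ← mul_assoc, xab_y, ← mul_assoc]
      exact J_mul_x _ (J_mul_x _ (Submodule.sub_mem _ (Submodule.neg_mem _ m4) m5))
  | zero => rw [zero_mul]; exact Submodule.zero_mem _
  | add u v _ _ hu hv => rw [add_mul]; exact Submodule.add_mem _ hu hv
  | smul c u _ hu => rw [smul_mul_assoc]; exact Submodule.smul_mem _ _ hu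

lemma xx_xa : (x * x) * xa = xa := by rw [mul_assoc, x_xa, x_xa]
lemma xx_xma : (x * x) * xma = xma := by
  rw [mul_assoc, x_xma, show x * -xma = -(x * xma) from mul_neg x xma, x_xma, neg_neg]

lemma J_mul_xa : ∀ a ∈ Jspan, a * xa ∈ Jspan := by
  intro a ha
  induction ha using Submodule.span_induction with
  | mem b hb =>
    rcases basis_cases hb with rfl | rfl | rfl | rfl | rfl | rfl
    · rw [xb_xa]; exact m5
    · rw [mul_assoc, x_xa, xb_xa]; exact m5
    · rw [mul_assoc, xx_xa, xb_xa]; exact m5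
    · rw [xab_xa]; exact Submodule.zero_mem _
    · rw [mul_assoc, x_xa, xab_xa]; exact Submodule.zero_mem _
    · rw [mul_assoc, xx_xa, xab_xa]; exact Submodule.zero_mem _
  | zero => rw [zero_mul]; exact Submodule.zero_mem _
  | add u v _ _ hu hv => rw [add_mul]; exact Submodule.add_mem _ hu hv
  | smul c u _ hu => rw [smul_mul_assoc]; exact Submodule.smul_mem _ _ hu

lemma xb_nxma : xb * -xma = 0 := by
  rw [show xb * -xma = -(xb * xma) from mul_neg xb xma, xb_xma, neg_zero]
lemma xab_nxma : xab * -xma = -(xab * xma) := mul_neg xab xma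

lemma J_mul_xma : ∀ a ∈ Jspan, a * xma ∈ Jspan := by
  intro a ha
  induction ha using Submodule.span_induction with
  | mem b hb =>
    rcases basis_cases hb with rfl | rfl | rfl | rfl | rfl | rfl
    · rw [xb_xma]; exact Submodule.zero_mem _
    · rw [mul_assoc, x_xma, xb_nxma]; exact Submodule.zero_mem _
    · rw [mul_assoc, xx_xma, xb_xma]; exact Submodule.zero_mem _
    · rw [xab_xma]; exact Submodule.neg_mem _ m2
    · rw [mul_assoc, x_xma, xab_nxma, xab_xma, neg_neg]; exact m2
    · rw [mul_assoc, xx_xma, xab_xma]; exact Submodule.neg_mem _ m2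
  | zero => rw [zero_mul]; exact Submodule.zero_mem _
  | add u v _ _ hu hv => rw [add_mul]; exact Submodule.add_mem _ hu hv
  | smul c u _ hu => rw [smul_mul_assoc]; exact Submodule.smul_mem _ _ hu

lemma xbx_xb : (xb * x) * xb = 0 := by
  simp [mul_assoc, x_xb, x_xb', mul_sub, xb_xb, xb_xb']
lemma xabx_xb : (xab * x) * xb = 0 := by
  simp [mul_assoc, x_xb, x_xb', mul_sub, xab_xb, xab_xb']
lemma xbx_xab : (xb * x) * xab = 0 := by
  simp [mul_assoc, x_xab, x_xab', mul_add, xb_xab, xb_xab']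
lemma xabx_xab : (xab * x) * xab = 0 := by
  simp [mul_assoc, x_xab, x_xab', mul_add, xab_xab, xab_xab']
lemma xbxx_xb : (xb * (x * x)) * xb = 0 := by
  simp [mul_assoc, x_xb, x_xb', mul_sub, xb_xb, xb_xb']
lemma xabxx_xb : (xab * (x * x)) * xb = 0 := by
  simp [mul_assoc, x_xb, x_xb', mul_sub, xab_xb, xab_xb']
lemma xbxx_xab : (xb * (x * x)) * xab = 0 := by
  simp [mul_assoc, x_xab, x_xab', mul_add, xb_xab, xb_xab']
lemma xabxx_xab : (xab * (x * x)) * xab = 0 := by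
  simp [mul_assoc, x_xab, x_xab', mul_add, xab_xab, xab_xab']

lemma Jxb : ∀ a ∈ Jspan, a * xb = 0 := by
  intro a ha
  induction ha using Submodule.span_induction with
  | mem b hb =>
    rcases basis_cases hb with rfl | rfl | rfl | rfl | rfl | rfl
    · exact xb_xb
    · exact xbx_xb
    · exact xbxx_xb
    · exact xab_xb
    · exact xabx_xb
    · exact xabxx_xb
  | zero => rw [zero_mul]
  | add u v _ _ hu hv => rw [add_mul, hu, hv, add_zero]
  | smul c u _ hu => rw [smul_mul_assoc, hu, smul_zero]

lemma Jxab : ∀ a ∈ Jspan, a * xab = 0 := by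
  intro a ha
  induction ha using Submodule.span_induction with
  | mem b hb =>
    rcases basis_cases hb with rfl | rfl | rfl | rfl | rfl | rfl
    · exact xb_xab
    · exact xbx_xab
    · exact xbxx_xab
    · exact xab_xab
    · exact xabx_xab
    · exact xabxx_xab
  | zero => rw [zero_mul]
  | add u v _ _ hu hv => rw [add_mul, hu, hv, add_zero]
  | smul c u _ hu => rw [smul_mul_assoc, hu, smul_zero]

lemma left_mul : ∀ r : AP, ∀ a ∈ Jspan, r * a ∈ Jspan := by
  have key : ∀ f : F, ∀ a ∈ Jspan, p f * a ∈ Jspan := by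
    intro f
    induction f using FreeAlgebra.induction with
    | grade0 c =>
      intro a ha
      rw [AlgHom.commutes, ← Algebra.smul_def]
      exact Submodule.smul_mem _ _ ha
    | grade1 i =>
      fin_cases i
      · show ∀ a ∈ Jspan, x * a ∈ Jspan
        exact left_aux (by rw [x_xb]; exact Submodule.sub_mem _ m2 m1)
          (by rw [x_xab]; exact Submodule.add_mem _ m5 m4)
      · show ∀ a ∈ Jspan, y * a ∈ Jspan
        exact left_aux (by rw [y_xb]; exact m1)
          (by rw [y_xab]; exact Submodule.neg_mem _ m5)
      · show ∀ a ∈ Jspan, xa * a ∈ Jspan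
        exact left_aux (by rw [xa_xb]; exact Submodule.add_mem _ m4 m5)
          (by rw [xa_xab]; exact Submodule.zero_mem _)
      · show ∀ a ∈ Jspan, xma * a ∈ Jspan
        exact left_aux (by rw [xma_xb]; exact Submodule.zero_mem _)
          (by rw [xma_xab]; exact Submodule.sub_mem _ m1 m2)
      · show ∀ a ∈ Jspan, xb * a ∈ Jspan
        exact left_aux (by rw [xb_xb]; exact Submodule.zero_mem _)
          (by rw [xb_xab]; exact Submodule.zero_mem _)
      · show ∀ a ∈ Jspan, xab * a ∈ Jspan
        exact left_aux (by rw [xab_xb]; exact Submodule.zero_mem _)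
          (by rw [xab_xab]; exact Submodule.zero_mem _)
    | mul f g hf hg =>
      intro a ha
      rw [map_mul, mul_assoc]
      exact hf _ (hg a ha)
    | add f g hf hg =>
      intro a ha
      rw [map_add, add_mul]
      exact Submodule.add_mem _ (hf a ha) (hg a ha)
  intro r a ha
  obtain ⟨f, rfl⟩ := RingQuot.mkAlgHom_surjective ℂ RelP r
  exact key f a ha

lemma right_mul : ∀ r : AP, ∀ a ∈ Jspan, a * r ∈ Jspan := by
  have key : ∀ f : F, ∀ a ∈ Jspan, a * p f ∈ Jspan := by
    intro f
    induction f using FreeAlgebra.induction with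
    | grade0 c =>
      intro a ha
      rw [AlgHom.commutes, ← Algebra.commutes, ← Algebra.smul_def]
      exact Submodule.smul_mem _ _ ha
    | grade1 i =>
      fin_cases i
      · exact J_mul_x
      · exact J_mul_y
      · exact J_mul_xa
      · exact J_mul_xma
      · show ∀ a ∈ Jspan, a * xb ∈ Jspan
        intro a ha; rw [Jxb a ha]; exact Submodule.zero_mem _
      · show ∀ a ∈ Jspan, a * xab ∈ Jspan
        intro a ha; rw [Jxab a ha]; exact Submodule.zero_mem _
    | mul f g hf hg =>
      intro a ha
      rw [map_mul, ← mul_assoc]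
      exact hg _ (hf a ha)
    | add f g hf hg =>
      intro a ha
      rw [map_add, mul_add]
      exact Submodule.add_mem _ (hf a ha) (hg a ha)
  intro r a ha
  obtain ⟨f, rfl⟩ := RingQuot.mkAlgHom_surjective ℂ RelP r
  exact key f a ha

theorem stmt10 :
    (∀ a ∈ Jspan, ∀ r : AP, r * a ∈ Jspan ∧ a * r ∈ Jspan) ∧
    (∀ a ∈ Jspan, ∀ b ∈ Jspan, a * b = 0) := by
  constructor
  · intro a ha r
    exact ⟨left_mul r a ha, right_mul r a ha⟩
  · intro a ha b hb
    induction hb using Submodule.span_induction with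
    | mem c hc =>
      rcases basis_cases hc with rfl | rfl | rfl | rfl | rfl | rfl
      · exact Jxb a ha
      · rw [← mul_assoc, Jxb a ha, zero_mul]
      · rw [← mul_assoc, Jxb a ha, zero_mul]
      · exact Jxab a ha
      · rw [← mul_assoc, Jxab a ha, zero_mul]
      · rw [← mul_assoc, Jxab a ha, zero_mul]
    | zero => rw [mul_zero]
    | add u v _ _ hu hv => rw [mul_add, hu, hv, add_zero]
    | smul c u _ hu => rw [mul_smul_comm, hu, smul_zero]

end
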